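/- arXiv:2502.09006 — 13 statements merged into one kernel-verified Lean document; each statement's English description precedes it below -/
import Mathlib

section
/- If the weighted envy-graph of an allocation X has no positive-cost directed cycle, then setting each agent i's subsidy p_i := w_i · ℓ_i(X), where ℓ_i(X) is the maximum cost of a directed path starting at i (and 0 if all such paths have nonpositive cost), makes (X, p) weighted envy-free: (v_i(X_i)+p_i)/w_i ≥ (v_i(X_j)+p_j)/w_j for all i, j. -/
/-- Cost of a path (list of vertices): sum of edge costs of consecutive pairs. -/
def pathCost {N : Type*} (c : N → N → ℝ) : List N → ℝ
  | a :: b :: rest => c a b + pathCost c (b :: rest)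
  | _ => 0

/-- Cost of a directed cycle given by a list of distinct vertices. -/
def cycleCost {N : Type*} (c : N → N → ℝ) (l : List N) : ℝ :=
  pathCost c (l ++ l.take 1)

/-- The set of costs of simple paths starting at `i`
(the single-vertex path `[i]` has cost `0`, so `0` is in the set). -/
def startCosts {N : Type*} (c : N → N → ℝ) (i : N) : Set ℝ :=
  {x | ∃ l : List N, l.Nodup ∧ l.head? = some i ∧ pathCost c l = x}

/-!
Removing a cycle from a walk starting at `i` does not decrease its cost when no cycle has
positive cost, so `c i j + ℓ j ≤ ℓ i` for every edge `(i, j)`: prepend `i` to a best path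
from `j`. Dividing the envy-freeness inequality by the weights turns it into exactly this
inequality.
-/

namespace pathCost

variable {N : Type*} (c : N → N → ℝ)

theorem cons_cons (a b : N) (l : List N) :
    pathCost c (a :: b :: l) = c a b + pathCost c (b :: l) :=
  rfl

theorem append_cons : ∀ (xs : List N) (y : N) (ys : List N),
    pathCost c (xs ++ y :: ys) = pathCost c (xs ++ [y]) + pathCost c (y :: ys)
  | [], _, _ => by simp [pathCost]
  | [_], _, _ => by simp [pathCost]
  | a :: b :: t, y, ys => by
    have ih := append_cons (b :: t) y ys
    simp only [List.cons_append] at ih ⊢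
    rw [cons_cons, cons_cons, ih]
    ring

theorem cons_append_cons (i : N) (a b : List N) :
    pathCost c (i :: (a ++ i :: b)) = cycleCost c (i :: a) + pathCost c (i :: b) :=
  append_cons c (i :: a) i b

variable {c}

theorem cons_le_of_mem_upperBounds (hcyc : ∀ l : List N, l.Nodup → cycleCost c l ≤ 0)
    {i : N} {m : ℝ} (hm : m ∈ upperBounds (startCosts c i)) {l : List N} (hl : l.Nodup) :
    pathCost c (i :: l) ≤ m := by
  by_cases hi : i ∈ l
  · obtain ⟨a, b, rfl⟩ := List.append_of_mem hi
    have hab := List.nodup_append.mp hl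
    have hia : (i :: a).Nodup :=
      List.nodup_cons.mpr ⟨fun h => hab.2.2 i h i List.mem_cons_self rfl, hab.1⟩
    have hcycle := hcyc _ hia
    have hpath := hm ⟨i :: b, hab.2.1, rfl, rfl⟩
    rw [cons_append_cons]
    linarith
  · exact hm ⟨i :: l, List.nodup_cons.mpr ⟨hi, hl⟩, rfl, rfl⟩

theorem add_le_of_isGreatest_startCosts (hcyc : ∀ l : List N, l.Nodup → cycleCost c l ≤ 0)
    {ℓ : N → ℝ} (hℓ : ∀ i, IsGreatest (startCosts c i) (ℓ i)) (i j : N) :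
    c i j + ℓ j ≤ ℓ i := by
  obtain ⟨l, hl, hhead, hcost⟩ := (hℓ j).1
  obtain ⟨l', rfl⟩ := List.head?_eq_some_iff.mp hhead
  rw [← hcost, ← cons_cons]
  exact cons_le_of_mem_upperBounds hcyc (hℓ i).2 hl

end pathCost

theorem stmt2_general {N : Type*}
    (w : N → ℝ) (hw : ∀ i, 0 < w i)
    (v : N → N → ℝ)
    (hcyc : ∀ l : List N, l.Nodup →
      cycleCost (fun i j => v i j / w j - v i i / w i) l ≤ 0)
    (ℓ : N → ℝ)
    (hℓ : ∀ i, IsGreatest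
      (startCosts (fun i j => v i j / w j - v i i / w i) i) (ℓ i)) :
    ∀ i j, (v i i + w i * ℓ i) / w i ≥ (v i j + w j * ℓ j) / w j := by
  intro i j
  have hedge := pathCost.add_le_of_isGreatest_startCosts hcyc hℓ i j
  rw [add_div, add_div, mul_div_cancel_left₀ _ (hw i).ne', mul_div_cancel_left₀ _ (hw j).ne']
  linarith

/-- if the weighted envy-graph has no positive-cost cycle, then
subsidies `p i = w i * ℓ i` (with `ℓ i` the maximum cost of a path starting at `i`)
make the outcome weighted envy-free. -/
theorem stmt2 {N : Type*} [Fintype N]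
    (w : N → ℝ) (hw : ∀ i, 0 < w i)
    (v : N → N → ℝ) (hv : ∀ i j, 0 ≤ v i j)
    (hcyc : ∀ l : List N, l.Nodup →
      cycleCost (fun i j => v i j / w j - v i i / w i) l ≤ 0)
    (ℓ : N → ℝ)
    (hℓ : ∀ i, IsGreatest
      (startCosts (fun i j => v i j / w j - v i i / w i) i) (ℓ i)) :
    ∀ i j, (v i i + w i * ℓ i) / w i ≥ (v i j + w j * ℓ j) / w j :=
  stmt2_general w hw v hcyc ℓ hℓ
end

section
/- For any weighted envy-freeable allocation X (one whose envy-graph has no positive-cost cycle), the subsidy vector p* defined by p*_i = w_i · ℓ_i(X) is pointwise minimal: any nonnegative subsidy vector p making (X,p) weighted envy-free satisfies p_i ≥ p*_i for all agents i. -/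
private lemma pathCost_le {N : Type*}
    (w : N → ℝ) (hw : ∀ i, 0 < w i)
    (v : N → N → ℝ)
    (p : N → ℝ)
    (hWEF : ∀ i j, (v i i + p i) / w i ≥ (v i j + p j) / w j) :
    ∀ (l : List N) (a : N),
      pathCost (fun i j => v i j / w j - v i i / w i) (a :: l)
        ≤ p a / w a - p ((a :: l).getLast (by simp)) / w ((a :: l).getLast (by simp)) := by
  intro l
  induction l with
  | nil => intro a; simp [pathCost]
  | cons b rest ih =>
    intro a
    have h1 : pathCost (fun i j => v i j / w j - v i i / w i) (a :: b :: rest)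
        = (v a b / w b - v a a / w a) +
          pathCost (fun i j => v i j / w j - v i i / w i) (b :: rest) := rfl
    have h2 := ih b
    have h3 : v a b / w b - v a a / w a ≤ p a / w a - p b / w b := by
      have := hWEF a b
      rw [add_div, add_div] at this
      linarith
    have h4 : ((a :: b :: rest).getLast (by simp)) = ((b :: rest).getLast (by simp)) := by
      simp [List.getLast]
    rw [h1, h4]
    linarith

/-- the subsidy vector `p* i = w i * ℓ i` is pointwise minimal among
nonnegative subsidy vectors making the allocation weighted envy-free. -/
theorem stmt3 {N : Type*} [Fintype N]
    (w : N → ℝ) (hw : ∀ i, 0 < w i)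
    (v : N → N → ℝ) (hv : ∀ i j, 0 ≤ v i j)
    (hcyc : ∀ l : List N, l.Nodup →
      cycleCost (fun i j => v i j / w j - v i i / w i) l ≤ 0)
    (ℓ : N → ℝ)
    (hℓ : ∀ i, IsGreatest
      (startCosts (fun i j => v i j / w j - v i i / w i) i) (ℓ i))
    (p : N → ℝ) (hp : ∀ i, 0 ≤ p i)
    (hWEF : ∀ i j, (v i i + p i) / w i ≥ (v i j + p j) / w j) :
    ∀ i, w i * ℓ i ≤ p i := by
  intro i
  obtain ⟨⟨l, hnd, hhead, hcost⟩, -⟩ := hℓ i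
  match l, hhead with
  | a :: rest, hhead =>
    have ha : a = i := by simpa using hhead
    subst ha
    have h := pathCost_le w hw v p hWEF rest a
    set b := (a :: rest).getLast (by simp) with hb
    have hℓle : ℓ a ≤ p a / w a := by
      have hpb : 0 ≤ p b / w b := div_nonneg (hp b) (hw b).le
      rw [← hcost]; linarith
    calc w a * ℓ a ≤ w a * (p a / w a) := by
          exact mul_le_mul_of_nonneg_left hℓle (hw a).le
      _ = p a := by rw [mul_comm, div_mul_cancel₀ _ (hw a).ne']
end

section
/- If the weighted envy-graph of an allocation X has no positive-cost directed cycle, then there exists at least one agent i for whom the maximum cost of any path starting at i is at most 0, i.e., the minimal subsidy p*_i = w_i·max(0, ℓ_i(X)) equals 0 for some agent. -/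
/-- The set of costs of nonempty simple paths (at least one edge) starting at `i`. -/
def startCostsNE {N : Type*} (c : N → N → ℝ) (i : N) : Set ℝ :=
  {x | ∃ l : List N, l.Nodup ∧ l.head? = some i ∧ 2 ≤ l.length ∧ pathCost c l = x}

namespace Stmt4Aux
variable {N : Type*} (c : N → N → ℝ)

lemma pathCost_nil : pathCost c ([] : List N) = 0 := rfl
lemma pathCost_single (x : N) : pathCost c [x] = 0 := rfl
lemma pathCost_cons2 (x y : N) (l : List N) :
    pathCost c (x :: y :: l) = c x y + pathCost c (y :: l) := rfl

lemma pathCost_split : ∀ (l1 : List N) (x : N) (l2 : List N),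
    pathCost c (l1 ++ x :: l2) = pathCost c (l1 ++ [x]) + pathCost c (x :: l2)
  | [], x, l2 => by simp [pathCost_single]
  | [z], x, l2 => by simp [pathCost_cons2, pathCost_single]
  | z :: u :: t, x, l2 => by
      have ih := pathCost_split (u :: t) x l2
      simp only [List.cons_append] at *
      rw [pathCost_cons2, pathCost_cons2, ih]
      ring

lemma dup_decomp : ∀ l : List N, ¬ l.Nodup →
    ∃ (a : List N) (y : N) (b d : List N), l = a ++ y :: b ++ y :: d
  | [], h => absurd List.nodup_nil h
  | z :: t, h => by
      rw [List.nodup_cons] at h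
      push_neg at h
      by_cases hz : z ∈ t
      · obtain ⟨s, u, rfl⟩ := List.append_of_mem hz
        exact ⟨[], z, s, u, rfl⟩
      · obtain ⟨a, y, b, d, rfl⟩ := dup_decomp t (h hz)
        exact ⟨z :: a, y, b, d, rfl⟩

lemma head?_append_cons (a : List N) (y : N) (s t : List N) :
    (a ++ y :: s).head? = (a ++ y :: t).head? := by
  cases a <;> simp

lemma eq_cons_of_head? {l : List N} {x : N} (h : l.head? = some x) :
    l = x :: l.tail := by
  cases l with
  | nil => simp at h
  | cons a t => simp at h; simp [h]

/-- Every closed walk has nonpositive cost, given that simple cycles do. -/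
lemma closed_nonpos (hcyc : ∀ l : List N, l.Nodup → cycleCost c l ≤ 0) :
    ∀ (n : ℕ) (l : List N) (x : N), l.length ≤ n → pathCost c (x :: l ++ [x]) ≤ 0 := by
  intro n
  induction n with
  | zero =>
      intro l x hl
      have : l = [] := List.eq_nil_of_length_eq_zero (Nat.le_zero.mp hl)
      subst this
      have := hcyc [x] (List.nodup_singleton x)
      simpa [cycleCost] using this
  | succ n ih =>
      intro l x hl
      by_cases hnd : (x :: l).Nodup
      · have := hcyc (x :: l) hnd
        simpa [cycleCost] using this
      · obtain ⟨a, y, b, d, hdec⟩ := dup_decomp (x :: l) hnd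
        have hlen : a.length + b.length + d.length + 2 = l.length + 1 := by
          have := congrArg List.length hdec
          simp at this
          omega
        have e : x :: l ++ [x] = a ++ y :: ((y :: b).tail ++ y :: (d ++ [x])) := by
          rw [show x :: l = (x :: l) from rfl, hdec]; simp
        have split1 : pathCost c (x :: l ++ [x])
            = pathCost c (a ++ [y]) + pathCost c (y :: (b ++ y :: (d ++ [x]))) := by
          rw [e]; simpa using pathCost_split c a y (b ++ y :: (d ++ [x]))
        have split2 : pathCost c (y :: (b ++ y :: (d ++ [x])))
            = pathCost c (y :: b ++ [y]) + pathCost c (y :: (d ++ [x])) := by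
          simpa using pathCost_split c (y :: b) y (d ++ [x])
        have hmid : pathCost c (y :: b ++ [y]) ≤ 0 := ih b y (by omega)
        -- the remaining walk
        set m : List N := a ++ y :: d with hm
        have hmhead : m.head? = some x := by
          rw [hm, head?_append_cons a y d (b ++ y :: d)]
          have h0 : (x :: l).head? = some x := rfl
          rw [hdec] at h0
          simpa using h0
        have hmx : m = x :: m.tail := eq_cons_of_head? hmhead
        have hmtl : m.tail.length ≤ n := by
          have h1 : m.length = a.length + d.length + 1 := by
            simp only [hm, List.length_append, List.length_cons]; omega
          have h2 : m.length = m.tail.length + 1 := by rw [hmx]; simp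
          omega
        have hrest : pathCost c (a ++ [y]) + pathCost c (y :: (d ++ [x])) ≤ 0 := by
          have := pathCost_split c a y (d ++ [x])
          have hmw : a ++ y :: (d ++ [x]) = x :: m.tail ++ [x] := by
            rw [← List.cons_append, ← hmx, hm]; simp
          rw [← this, hmw]
          exact ih m.tail x hmtl
        calc pathCost c (x :: l ++ [x])
            = pathCost c (a ++ [y]) + pathCost c (y :: b ++ [y])
              + pathCost c (y :: (d ++ [x])) := by rw [split1, split2]; ring
          _ ≤ 0 := by linarith

end Stmt4Aux

/-- if every cycle of the weighted envy-graph has nonpositive cost,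
then some agent `i` has `ℓ i ≤ 0`, i.e. its minimal subsidy `w i * max 0 (ℓ i)` is `0`. -/
theorem stmt4 {N : Type*} [Fintype N] [Nonempty N]
    (w : N → ℝ) (hw : ∀ i, 0 < w i)
    (v : N → N → ℝ)
    (hcyc : ∀ l : List N, l.Nodup →
      cycleCost (fun i j => v i j / w j - v i i / w i) l ≤ 0)
    (ℓ : N → ℝ)
    (hℓ : ∀ i, IsGreatest
      (startCostsNE (fun i j => v i j / w j - v i i / w i) i) (ℓ i)) :
    ∃ i, ℓ i ≤ 0 ∧ w i * max 0 (ℓ i) = 0 := by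
  open Stmt4Aux in
  set c : N → N → ℝ := fun i j => v i j / w j - v i i / w i with hc
  -- every walk starting at i has cost at most max 0 (ℓ i)
  have W : ∀ (n : ℕ) (l : List N) (i : N), l.length ≤ n → l.head? = some i →
      pathCost c l ≤ max 0 (ℓ i) := by
    intro n
    induction n with
    | zero =>
        intro l i hl hh
        rw [Stmt4Aux.eq_cons_of_head? hh] at hl
        exact absurd hl (by simp)
    | succ n ih =>
        intro l i hl hh
        by_cases hnd : l.Nodup
        · by_cases h2 : 2 ≤ l.length
          · exact le_trans ((hℓ i).2 ⟨l, hnd, hh, h2, rfl⟩) (le_max_right _ _)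
          · push_neg at h2
            have hxx := Stmt4Aux.eq_cons_of_head? hh
            have hlen1 := congrArg List.length hxx
            simp only [List.length_cons] at hlen1
            have htl : l.tail = [] := List.eq_nil_of_length_eq_zero (by omega)
            rw [hxx, htl, Stmt4Aux.pathCost_single]
            exact le_max_left _ _
        · obtain ⟨a, y, b, d, hdec⟩ := Stmt4Aux.dup_decomp l hnd
          have hlen : l.length = a.length + b.length + d.length + 2 := by
            rw [hdec]; simp; omega
          have split1 : pathCost c l
              = pathCost c (a ++ [y]) + pathCost c (y :: (b ++ y :: d)) := by
            rw [hdec]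
            simpa using Stmt4Aux.pathCost_split c a y (b ++ y :: d)
          have split2 : pathCost c (y :: (b ++ y :: d))
              = pathCost c (y :: b ++ [y]) + pathCost c (y :: d) := by
            simpa using Stmt4Aux.pathCost_split c (y :: b) y d
          have hmid : pathCost c (y :: b ++ [y]) ≤ 0 :=
            Stmt4Aux.closed_nonpos c hcyc b.length b y le_rfl
          have hrest : pathCost c (a ++ [y]) + pathCost c (y :: d) ≤ max 0 (ℓ i) := by
            rw [← Stmt4Aux.pathCost_split c a y d]
            refine ih (a ++ y :: d) i (by simp; omega) ?_
            rw [Stmt4Aux.head?_append_cons a y d (b ++ y :: d)]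
            have h0 := hh
            rw [hdec] at h0
            simpa using h0
          calc pathCost c l
              = pathCost c (a ++ [y]) + pathCost c (y :: b ++ [y])
                + pathCost c (y :: d) := by rw [split1, split2]; ring
            _ ≤ max 0 (ℓ i) := by linarith
  -- suppose all ℓ i > 0
  by_contra hcon
  push_neg at hcon
  have hpos : ∀ i, 0 < ℓ i := by
    intro i
    by_contra hne
    push_neg at hne
    exact (hcon i hne) (by rw [max_eq_left hne, mul_zero])
  obtain ⟨i, hi⟩ := Finite.exists_max ℓ
  obtain ⟨P, hPnd, hPhead, hPlen, hPcost⟩ := (hℓ i).1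
  have hPne : P ≠ [] := by intro h; rw [h] at hPlen; simp at hPlen
  set j : N := P.getLast hPne with hj
  have hPeq : P.dropLast ++ [j] = P := List.dropLast_append_getLast hPne
  obtain ⟨Q, hQnd, hQhead, hQlen, hQcost⟩ := (hℓ j).1
  have hQeq : Q = j :: Q.tail := Stmt4Aux.eq_cons_of_head? hQhead
  set L : List N := P.dropLast ++ Q with hL
  have hLcost : pathCost c L = ℓ i + ℓ j := by
    rw [hL, hQeq, Stmt4Aux.pathCost_split c P.dropLast j Q.tail, hPeq, ← hQeq,
        hPcost, hQcost]
  have hLhead : L.head? = some i := by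
    have hdne : P.dropLast ≠ [] := by
      intro h
      have := congrArg List.length hPeq
      rw [h] at this
      simp at this
      omega
    rw [hL, List.head?_append_of_ne_nil _ hdne]
    rw [← hPeq] at hPhead
    rwa [List.head?_append_of_ne_nil _ hdne] at hPhead
  have hW := W L.length L i le_rfl hLhead
  rw [hLcost, max_eq_right (le_of_lt (hpos i))] at hW
  have : ℓ j ≤ 0 := by linarith
  exact absurd this (not_le.mpr (hpos j))
end

section
/- Suppose an allocation X satisfies v_i(X_i) ≥ v_j(X_i) for all agents i, j. Then for every directed path P in the weighted envy-graph from agent i to agent j, the cost of P is at most v_j(X_j)/w_j − v_i(X_i)/w_i, where edge (h,k) has cost v_h(X_k)/w_k − v_h(X_h)/w_h. -/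
lemma stmt6_aux {N : Type*}
    (w : N → ℝ) (hw : ∀ i, 0 < w i)
    (u : N → N → ℝ)
    (h : ∀ i j, u j i ≤ u i i) :
    ∀ (l : List N) (i j : N), l.head? = some i → l.getLast? = some j →
      pathCost (fun a b => u a b / w b - u a a / w a) l
        ≤ u j j / w j - u i i / w i := by
  intro l
  induction l with
  | nil => intro i j hi; simp at hi
  | cons a t ih =>
    intro i j hi hj
    simp at hi; subst hi
    match t, hj with
    | [], hj =>
      simp [List.getLast?] at hj
      subst hj
      simp [pathCost]
    | b :: rest, hj =>
      have hj' : (b :: rest).getLast? = some j := by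
        rw [← hj]; simp [List.getLast?_cons_cons]
      have := ih b j rfl hj'
      have hub : u a b / w b ≤ u b b / w b :=
        div_le_div_of_nonneg_right (h b a) (hw b).le |>.trans_eq rfl
      simp only [pathCost]
      linarith

/-- if `v i (X i) ≥ v j (X i)` for all agents `i, j`, then the cost of
any path from `i` to `j` in the weighted envy-graph is at most
`v j (X j) / w j − v i (X i) / w i`. Here `u a b` denotes `v a (X b)`. -/
theorem stmt6 {N : Type*}
    (w : N → ℝ) (hw : ∀ i, 0 < w i)
    (u : N → N → ℝ) (hu : ∀ i j, 0 ≤ u i j)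
    (h : ∀ i j, u j i ≤ u i i) :
    ∀ (i j : N) (l : List N), l.Nodup → l.head? = some i → l.getLast? = some j →
      pathCost (fun a b => u a b / w b - u a a / w a) l
        ≤ u j j / w j - u i i / w i := by
  intro i j l _ hi hj
  exact stmt6_aux w hw u h l i j hi hj
end

section
/- Let X be an allocation whose weighted envy-graph has no positive-cost cycle, and suppose every edge cost satisfies cost(i,k) ≥ −z for some z > 0. Then for every agent i, the maximum path cost ℓ_i(X) starting at i satisfies ℓ_i(X) ≤ z; hence the minimal subsidy for agent i is at most w_i·z. -/
lemma pathCost_append_single {N : Type*} (c : N → N → ℝ) (a : N) :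
    ∀ (l : List N) (h : l ≠ []),
      pathCost c (l ++ [a]) = pathCost c l + c (l.getLast h) a
  | [], h => absurd rfl h
  | [x], _ => by simp [pathCost]
  | x :: y :: rest, _ => by
      have := pathCost_append_single c a (y :: rest) (by simp)
      simp only [List.cons_append, pathCost, List.append_eq] at this ⊢
      rw [this, List.getLast_cons (by simp : (y :: rest) ≠ [])]
      ring

/-- if the envy-graph has no positive-cost cycle and every edge cost is
at least `−z` (with `z > 0`), then the maximal path cost from each agent is at most
`z`, hence the minimal subsidy of agent `i` is at most `w i * z`. -/
theorem stmt7 {N : Type*} [Fintype N]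
    (w : N → ℝ) (hw : ∀ i, 0 < w i)
    (v : N → N → ℝ) (hv : ∀ i j, 0 ≤ v i j)
    (z : ℝ) (hz : 0 < z)
    (hedge : ∀ i k, -z ≤ v i k / w k - v i i / w i)
    (hcyc : ∀ l : List N, l.Nodup →
      cycleCost (fun i j => v i j / w j - v i i / w i) l ≤ 0)
    (ℓ : N → ℝ)
    (hℓ : ∀ i, IsGreatest
      (startCosts (fun i j => v i j / w j - v i i / w i) i) (ℓ i)) :
    ∀ i, ℓ i ≤ z ∧ w i * ℓ i ≤ w i * z := by
  intro i
  set c : N → N → ℝ := fun i j => v i j / w j - v i i / w i with hc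
  obtain ⟨l, hnd, hhd, hpc⟩ := (hℓ i).1
  have hne : l ≠ [] := by
    intro h; rw [h] at hhd; simp at hhd
  have hhead : l.head hne = i := by
    rwa [List.head?_eq_head hne, Option.some_inj] at hhd
  have htake : l.take 1 = [i] := by
    cases l with
    | nil => exact absurd rfl hne
    | cons a t => simp at hhead ⊢; exact hhead
  have hcycle := hcyc l hnd
  rw [cycleCost, htake, pathCost_append_single c i l hne] at hcycle
  have hlz : ℓ i ≤ z := by
    have h1 : -z ≤ c (l.getLast hne) i := hedge _ _
    linarith [hpc ▸ hcycle]
  exact ⟨hlz, mul_le_mul_of_nonneg_left hlz (hw i).le⟩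
end

section
/- Consider n agents with weights w_1 ≤ ... ≤ w_n, identical items each of value V, and an allocation where there are 1 + ∑_i (w_i − 1) items (weights are positive integers). Then any weighted envy-free outcome (allocation of items plus nonnegative subsidies) requires total subsidy at least (n−1)V. -/
/-- with `n` agents with positive integer weights and
`m = 1 + ∑ i (w i − 1)` identical items each of value `V > 0`, every weighted
envy-free outcome (item counts plus nonnegative subsidies) requires total
subsidy at least `(n − 1) · V`. -/
theorem stmt11 {n : ℕ} (hn : 0 < n)
    (w : Fin n → ℕ) (hw : ∀ i, 1 ≤ w i)
    (V : ℝ) (hV : 0 < V)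
    (m : Fin n → ℕ) (hm : ∑ i, m i = 1 + ∑ i, (w i - 1))
    (p : Fin n → ℝ) (hp : ∀ i, 0 ≤ p i)
    (hWEF : ∀ i j, (V * (m i : ℝ) + p i) / (w i : ℝ)
      ≥ (V * (m j : ℝ) + p j) / (w j : ℝ)) :
    ((n : ℝ) - 1) * V ≤ ∑ i, p i := by
  -- find an agent i with m i ≥ w i
  obtain ⟨i, hi⟩ : ∃ i, w i ≤ m i := by
    by_contra h
    push_neg at h
    have : ∑ i, m i ≤ ∑ i, (w i - 1) :=
      Finset.sum_le_sum fun i _ => Nat.le_sub_one_of_lt (h i)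
    omega
  -- each agent j gets p j ≥ V * (w j - m j)
  have key : ∀ j, V * (w j : ℝ) - V * (m j : ℝ) ≤ p j := by
    intro j
    have hwj : (0:ℝ) < (w j : ℝ) := by exact_mod_cast hw j
    have hwi : (0:ℝ) < (w i : ℝ) := by exact_mod_cast hw i
    have h1 : V ≤ (V * (m i : ℝ) + p i) / (w i : ℝ) := by
      rw [le_div_iff₀ hwi]
      have : V * (w i : ℝ) ≤ V * (m i : ℝ) := by
        apply mul_le_mul_of_nonneg_left _ hV.le
        exact_mod_cast hi
      nlinarith [hp i]
    have h2 := hWEF j i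
    have h3 : V ≤ (V * (m j : ℝ) + p j) / (w j : ℝ) := le_trans h1 h2
    rw [le_div_iff₀ hwj] at h3
    linarith
  have hsum := Finset.sum_le_sum (fun j (_ : j ∈ Finset.univ) => key j)
  rw [Finset.sum_sub_distrib, ← Finset.mul_sum, ← Finset.mul_sum] at hsum
  -- cast the item-count identity
  have hWn : (n:ℕ) ≤ ∑ i, w i := by
    calc (n:ℕ) = ∑ _i : Fin n, 1 := by simp
    _ ≤ ∑ i, w i := Finset.sum_le_sum fun i _ => hw i
  have hsub : ∑ i, (w i - 1) = ∑ i, w i - n := by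
    have h : ∑ i, (w i - 1) + n = ∑ i, w i := by
      calc ∑ i, (w i - 1) + n = ∑ i, ((w i - 1) + 1) := by
            rw [Finset.sum_add_distrib]; simp
        _ = ∑ i, w i := Finset.sum_congr rfl fun i _ => by have := hw i; omega
    omega
  have hmcast : (∑ i, (m i : ℝ)) = 1 + (∑ i, (w i : ℝ)) - n := by
    have : ((∑ i, m i : ℕ) : ℝ) = ((1 + (∑ i, w i - n) : ℕ) : ℝ) := by
      rw [hm, hsub]
    push_cast [Nat.cast_sub hWn] at this
    push_cast
    linarith
  calc ((n : ℝ) - 1) * V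
      = V * (∑ i, (w i : ℝ)) - V * (∑ i, (m i : ℝ)) := by rw [hmcast]; ring
    _ ≤ ∑ i, p i := hsum
end

section
/- An allocation giving m_i identical items to agent i is non-redundant if v_i(X_i) = |X_i| for all i (binary additive valuations). For a non-redundant allocation X, the cost of any path in the weighted envy-graph from agent i to agent j is at most |X_j|/w_j − |X_i|/w_i. -/
/-- for a non-redundant allocation under binary additive valuations,
the cost of any path from agent `i` to agent `j` in the weighted envy-graph is at
most `|X j| / w j − |X i| / w i`. -/
theorem stmt12 {N M : Type*} [DecidableEq M]
    (w : N → ℝ) (hw : ∀ i, 0 < w i)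
    (v : N → M → ℝ) (hbin : ∀ i o, v i o = 0 ∨ v i o = 1)
    (X : N → Finset M)
    (hnr : ∀ i, ∑ o ∈ X i, v i o = ((X i).card : ℝ)) :
    ∀ (i j : N) (l : List N), l.Nodup → l.head? = some i → l.getLast? = some j →
      pathCost
        (fun a b => (∑ o ∈ X b, v a o) / w b - (∑ o ∈ X a, v a o) / w a) l
        ≤ ((X j).card : ℝ) / w j - ((X i).card : ℝ) / w i := by
  intro i j l _ h1 h2
  set f : N → ℝ := fun k => ((X k).card : ℝ) / w k with hf
  have hedge : ∀ a b, (∑ o ∈ X b, v a o) / w b - (∑ o ∈ X a, v a o) / w a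
      ≤ f b - f a := by
    intro a b
    have h1 : (∑ o ∈ X b, v a o) / w b ≤ f b := by
      apply div_le_div_of_nonneg_right ?_ (hw b).le
      calc ∑ o ∈ X b, v a o ≤ ∑ _o ∈ X b, (1 : ℝ) :=
            Finset.sum_le_sum (fun o _ => by rcases hbin a o with h | h <;> simp [h])
        _ = ((X b).card : ℝ) := by simp
    have h2 : (∑ o ∈ X a, v a o) / w a = f a := by rw [hnr a]
    linarith
  suffices H : ∀ (l : List N) (i j : N), l.head? = some i → l.getLast? = some j →
      pathCost (fun a b => (∑ o ∈ X b, v a o) / w b - (∑ o ∈ X a, v a o) / w a) l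
        ≤ f j - f i from H l i j h1 h2
  intro l
  induction l with
  | nil => intro i j h1 _; simp at h1
  | cons a t ih =>
    intro i j h1 h2
    cases t with
    | nil =>
      simp at h1 h2
      subst h1; subst h2
      simp [pathCost]
    | cons b t' =>
      have hia : i = a := by simpa using h1.symm
      subst hia
      have hrest := ih b j rfl (by rwa [List.getLast?_cons_cons] at h2)
      have := hedge i b
      simp only [pathCost]
      linarith
end

section
/- Every non-redundant allocation under binary additive valuations is weighted envy-freeable: if v_i(X_i) = |X_i| for all agents i, then the weighted envy-graph of X has no positive-cost cycle. -/
lemma pathCost_le_potential {N : Type*} (c : N → N → ℝ) (f : N → ℝ)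
    (hc : ∀ a b, c a b ≤ f b - f a) :
    ∀ (l : List N) (a : N), pathCost c (a :: l) ≤ f ((a :: l).getLast (by simp)) - f a := by
  intro l
  induction l with
  | nil => intro a; simp [pathCost]
  | cons b rest ih =>
    intro a
    have h1 := hc a b
    have h2 := ih b
    have : pathCost c (a :: b :: rest) = c a b + pathCost c (b :: rest) := rfl
    rw [this]
    have hlast : (a :: b :: rest).getLast (by simp) = (b :: rest).getLast (by simp) := by
      simp [List.getLast]
    rw [hlast]
    linarith

/-- every non-redundant allocation under binary additive valuations
is weighted envy-freeable: its weighted envy-graph has no positive-cost cycle. -/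
theorem stmt13 {N M : Type*} [DecidableEq M]
    (w : N → ℝ) (hw : ∀ i, 0 < w i)
    (v : N → M → ℝ) (hbin : ∀ i o, v i o = 0 ∨ v i o = 1)
    (X : N → Finset M)
    (hnr : ∀ i, ∑ o ∈ X i, v i o = ((X i).card : ℝ)) :
    ∀ l : List N, l.Nodup →
      cycleCost
        (fun a b => (∑ o ∈ X b, v a o) / w b - (∑ o ∈ X a, v a o) / w a) l ≤ 0 := by
  set c : N → N → ℝ := fun a b => (∑ o ∈ X b, v a o) / w b - (∑ o ∈ X a, v a o) / w a with hc
  set f : N → ℝ := fun i => ((X i).card : ℝ) / w i with hf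
  have hedge : ∀ a b, c a b ≤ f b - f a := by
    intro a b
    have hsum : ∑ o ∈ X b, v a o ≤ ((X b).card : ℝ) := by
      calc ∑ o ∈ X b, v a o ≤ ∑ _o ∈ X b, (1 : ℝ) := by
            apply Finset.sum_le_sum
            intro o _
            rcases hbin a o with h | h <;> simp [h]
        _ = ((X b).card : ℝ) := by simp
    have h1 : (∑ o ∈ X b, v a o) / w b ≤ ((X b).card : ℝ) / w b :=
      div_le_div_of_nonneg_right hsum (hw b).le |>.trans_eq rfl
    have h2 : (∑ o ∈ X a, v a o) / w a = ((X a).card : ℝ) / w a := by rw [hnr a]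
    simp only [hc, hf]
    linarith
  intro l _
  match l with
  | [] => simp [cycleCost, pathCost]
  | a :: rest =>
    have : cycleCost c (a :: rest) = pathCost c (a :: (rest ++ [a])) := by
      simp [cycleCost]
    rw [this]
    have h := pathCost_le_potential c f hedge (rest ++ [a]) a
    have hlast : ((a :: (rest ++ [a]))).getLast (by simp) = a := by
      simp [List.getLast_append]
    rw [hlast] at h
    linarith
end

section
/- With additive valuations over m identical items where agent i values each item at v_i, an allocation (m_1,...,m_n) of items (nonnegative integers summing to m) is weighted envy-freeable if and only if for all agents i,j with v_i < v_j we have m_i/w_i ≤ m_j/w_j. -/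
/-- Auxiliary potential construction: given a monotone `B : ℕ → ℝ` and positive
`V : ℕ → ℝ` such that `V u < V t → B u ≤ B t`, there is a monotone `G` with
`V u * (B u' - B u) ≤ G u' - G u` for all `u u'`. -/
lemma stmt14_aux (B V : ℕ → ℝ) (hB : Monotone B) (hV : ∀ k, 0 < V k)
    (hkey : ∀ u t, V u < V t → B u ≤ B t) :
    ∃ G : ℕ → ℝ, Monotone G ∧ ∀ u u', V u * (B u' - B u) ≤ G u' - G u := by
  set M : ℕ → ℝ := fun s => (Finset.range (s + 1)).sup' (by simp) V with hM
  have hMpos : ∀ s, 0 < M s := fun s =>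
    lt_of_lt_of_le (hV s) (Finset.le_sup' V (by simp))
  have hterm : ∀ s, 0 ≤ M s * (B (s + 1) - B s) := fun s =>
    mul_nonneg (hMpos s).le (sub_nonneg.mpr (hB (Nat.le_succ s)))
  refine ⟨fun u => ∑ s ∈ Finset.range u, M s * (B (s + 1) - B s), ?_, ?_⟩
  · intro u u' huu'
    exact Finset.sum_le_sum_of_subset_of_nonneg (Finset.range_subset_range.mpr huu')
      (fun s _ _ => hterm s)
  · intro u u'
    rcases le_or_gt u u' with hle | hlt
    · have hsub : (∑ s ∈ Finset.range u', M s * (B (s + 1) - B s))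
          - ∑ s ∈ Finset.range u, M s * (B (s + 1) - B s)
          = ∑ s ∈ Finset.Ico u u', M s * (B (s + 1) - B s) :=
        (Finset.sum_Ico_eq_sub _ hle).symm
      have htel : ∑ s ∈ Finset.Ico u u', (B (s + 1) - B s) = B u' - B u := by
        rw [Finset.sum_Ico_eq_sub _ hle, Finset.sum_range_sub, Finset.sum_range_sub]
        ring
      have hbound : ∑ s ∈ Finset.Ico u u', V u * (B (s + 1) - B s)
          ≤ ∑ s ∈ Finset.Ico u u', M s * (B (s + 1) - B s) := by
        apply Finset.sum_le_sum
        intro s hs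
        have hus : u ∈ Finset.range (s + 1) := by
          simp only [Finset.mem_Ico] at hs
          simp only [Finset.mem_range]
          omega
        exact mul_le_mul_of_nonneg_right (Finset.le_sup' V hus)
          (sub_nonneg.mpr (hB (Nat.le_succ s)))
      have h1 : V u * (B u' - B u) = ∑ s ∈ Finset.Ico u u', V u * (B (s + 1) - B s) := by
        rw [← Finset.mul_sum, htel]
      linarith
    · have hle := hlt.le
      have key2 : ∀ s, s < u → M s * (B (s + 1) - B s) ≤ V u * (B (s + 1) - B s) := by
        intro s hs
        rcases eq_or_lt_of_le (hB (Nat.le_succ s)) with heq | hBlt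
        · rw [← heq]; simp
        · refine mul_le_mul_of_nonneg_right ?_ (sub_nonneg.mpr (hB (Nat.le_succ s)))
          apply Finset.sup'_le
          intro t ht
          by_contra hcon
          push_neg at hcon
          have h1 := hkey u t hcon
          have h2 : B t ≤ B s := hB (Nat.lt_succ_iff.mp (Finset.mem_range.mp ht))
          have h3 : B (s + 1) ≤ B u := hB hs
          linarith
      have htel : ∑ s ∈ Finset.Ico u' u, (B (s + 1) - B s) = B u - B u' := by
        rw [Finset.sum_Ico_eq_sub _ hle, Finset.sum_range_sub, Finset.sum_range_sub]
        ring
      have hbound : ∑ s ∈ Finset.Ico u' u, M s * (B (s + 1) - B s)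
          ≤ V u * (B u - B u') := by
        rw [← htel, Finset.mul_sum]
        exact Finset.sum_le_sum fun s hs => key2 s (Finset.mem_Ico.mp hs).2
      have hsub : (∑ s ∈ Finset.range u, M s * (B (s + 1) - B s))
          - ∑ s ∈ Finset.range u', M s * (B (s + 1) - B s)
          = ∑ s ∈ Finset.Ico u' u, M s * (B (s + 1) - B s) :=
        (Finset.sum_Ico_eq_sub _ hle).symm
      linarith

/-- with identical items and additive per-item values `v i > 0`,
an allocation `(m i)` is weighted envy-freeable iff for all agents `i, j` with
`v i < v j` we have `m i / w i ≤ m j / w j`. -/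
theorem stmt14 {N : Type*} [Fintype N]
    (w v : N → ℝ) (hw : ∀ i, 0 < w i) (hv : ∀ i, 0 < v i)
    (m : N → ℕ) :
    (∃ p : N → ℝ, (∀ i, 0 ≤ p i) ∧
      ∀ i j, (v i * (m i : ℝ) + p i) / w i ≥ (v i * (m j : ℝ) + p j) / w j) ↔
    (∀ i j, v i < v j → (m i : ℝ) / w i ≤ (m j : ℝ) / w j) := by
  constructor
  · rintro ⟨p, hp, hpe⟩ i j hij
    have h1 : (v i * (m j : ℝ) + p j) / w j ≤ (v i * (m i : ℝ) + p i) / w i := hpe i j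
    have h2 : (v j * (m i : ℝ) + p i) / w i ≤ (v j * (m j : ℝ) + p j) / w j := hpe j i
    rw [div_le_div_iff₀ (hw j) (hw i)] at h1
    rw [div_le_div_iff₀ (hw i) (hw j)] at h2
    rw [div_le_div_iff₀ (hw i) (hw j)]
    nlinarith [hw i, hw j, h1, h2, hij]
  · intro h
    cases isEmpty_or_nonempty N with
    | inl hE =>
      exact ⟨fun _ => 0, fun i => le_rfl, fun i => (hE.false i).elim⟩
    | inr hNE =>
      set n := Fintype.card N with hn
      have hnpos : 0 < n := Fintype.card_pos
      set e0 : N ≃ Fin n := Fintype.equivFin N with he0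
      set f : Fin n → ℝ := fun k => (m (e0.symm k) : ℝ) / w (e0.symm k) with hf
      set σ : Equiv.Perm (Fin n) := Tuple.sort f with hσ
      have hsort : Monotone (f ∘ σ) := Tuple.monotone_sort f
      set clamp : ℕ → Fin n := fun k => ⟨min k (n - 1), by omega⟩ with hclamp
      set E : ℕ → N := fun k => e0.symm (σ (clamp k)) with hE
      set B : ℕ → ℝ := fun k => (m (E k) : ℝ) / w (E k) with hB
      set V : ℕ → ℝ := fun k => v (E k) with hV
      have hBmono : Monotone B := by
        intro k l hkl
        have : clamp k ≤ clamp l := by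
          simp only [hclamp, Fin.mk_le_mk]
          omega
        exact hsort this
      have hVpos : ∀ k, 0 < V k := fun k => hv (E k)
      have hkey : ∀ u t, V u < V t → B u ≤ B t := fun u t hut => h (E u) (E t) hut
      obtain ⟨G, hGmono, hG⟩ := stmt14_aux B V hBmono hVpos hkey
      set idx : N → ℕ := fun i => ((σ.symm (e0 i)) : ℕ) with hidx
      have hidxlt : ∀ i, idx i < n := fun i => (σ.symm (e0 i)).isLt
      have hEidx : ∀ i, E (idx i) = i := by
        intro i
        have hc : clamp (idx i) = σ.symm (e0 i) := by
          apply Fin.ext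
          have h1 : ((σ.symm (e0 i) : Fin n) : ℕ) < n := (σ.symm (e0 i)).isLt
          simp only [hclamp, hidx]
          omega
        simp [hE, hc]
      refine ⟨fun i => w i * (G n - G (idx i)), ?_, ?_⟩
      · intro i
        exact mul_nonneg (hw i).le (sub_nonneg.mpr (hGmono (hidxlt i).le))
      · intro i j
        have hGij := hG (idx i) (idx j)
        have hBi : B (idx i) = (m i : ℝ) / w i := by rw [hB]; simp only; rw [hEidx i]
        have hBj : B (idx j) = (m j : ℝ) / w j := by rw [hB]; simp only; rw [hEidx j]
        have hVi : V (idx i) = v i := by rw [hV]; simp only; rw [hEidx i]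
        rw [hBi, hBj, hVi] at hGij
        rw [ge_iff_le, div_le_div_iff₀ (hw j) (hw i)]
        have hmi : (m i : ℝ) / w i * w i = (m i : ℝ) := div_mul_cancel₀ _ (hw i).ne'
        have hmj : (m j : ℝ) / w j * w j = (m j : ℝ) := div_mul_cancel₀ _ (hw j).ne'
        rw [← hmi, ← hmj]
        nlinarith [mul_le_mul_of_nonneg_left hGij (mul_pos (hw i) (hw j)).le]
end

section
/- With identical items and additive per-item values, if agents are sorted so that v_1 ≥ v_2 ≥ ... ≥ v_n and the allocation (m_1,...,m_n) satisfies m_j/w_j ≤ m_{j-1}/w_{j-1} for all j ≥ 2, then for agents i > j the cost of the direct edge (i,j) in the weighted envy-graph is at most the sum of the edge costs along the descending chain (i, i−1, ..., j): cost(i,j) ≤ ∑_{k=j+1}^{i} cost(k, k−1). -/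
lemma stmt15_rmono (n : ℕ) (w : ℕ → ℝ) (m : ℕ → ℕ)
    (hchain : ∀ j, 2 ≤ j → j ≤ n →
      (m j : ℝ) / w j ≤ (m (j - 1) : ℝ) / w (j - 1)) :
    ∀ a b, 1 ≤ a → a ≤ b → b ≤ n → (m b : ℝ) / w b ≤ (m a : ℝ) / w a := by
  intro a b ha hab
  induction b, hab using Nat.le_induction with
  | base => intro _; exact le_refl _
  | succ b hab ih =>
    intro hbn
    have h := hchain (b + 1) (by omega) hbn
    simp only [Nat.add_sub_cancel] at h
    exact h.trans (ih (by omega))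

/-- identical items, agents `1,…,n` sorted with non-increasing
per-item values, and `m j / w j ≤ m (j−1) / w (j−1)` for `j ≥ 2`. Then for
agents `i > j`, the cost of the direct envy edge `(i, j)` is at most the sum of
edge costs along the descending chain `(i, i−1, …, j)`. -/
theorem stmt15 (n : ℕ) (v w : ℕ → ℝ) (m : ℕ → ℕ)
    (hv : ∀ k, 0 < v k) (hw : ∀ k, 0 < w k)
    (hsort : ∀ j, 2 ≤ j → j ≤ n → v j ≤ v (j - 1))
    (hchain : ∀ j, 2 ≤ j → j ≤ n →
      (m j : ℝ) / w j ≤ (m (j - 1) : ℝ) / w (j - 1)) :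
    ∀ i j, 1 ≤ j → j < i → i ≤ n →
      v i * (m j : ℝ) / w j - v i * (m i : ℝ) / w i
        ≤ ∑ k ∈ Finset.Icc (j + 1) i,
            (v k * (m (k - 1) : ℝ) / w (k - 1) - v k * (m k : ℝ) / w k) := by
  intro i j hj hji
  induction i, hji using Nat.le_induction with
  | base =>
    intro _
    rw [Finset.Icc_self, Finset.sum_singleton, Nat.add_sub_cancel]
  | succ i hi ih =>
    intro hin
    have hin' : i ≤ n := by omega
    have ihm := ih hin'
    rw [Finset.sum_Icc_succ_top (by omega : j + 1 ≤ i + 1), Nat.add_sub_cancel]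
    have hv' : v (i + 1) ≤ v i := by
      have := hsort (i + 1) (by omega) hin
      simpa using this
    have hr : (m i : ℝ) / w i ≤ (m j : ℝ) / w j :=
      stmt15_rmono n w m hchain j i hj (by omega) hin'
    have key : v (i + 1) * ((m j : ℝ) / w j - (m i : ℝ) / w i)
        ≤ v i * ((m j : ℝ) / w j - (m i : ℝ) / w i) :=
      mul_le_mul_of_nonneg_right hv' (sub_nonneg.mpr hr)
    simp only [mul_div_assoc] at ihm ⊢
    nlinarith [key]
end

section
/- Consider two agents with weights w_1 = 1 and w_2 = 10, two items o_1, o_2, and additive valuations v_1(o_1)=5, v_1(o_2)=7, v_2(o_1)=10, v_2(o_2)=8. Then neither the allocation X_1={o_1}, X_2={o_2} nor its swap X_1={o_2}, X_2={o_1} is weighted envy-freeable: no nonnegative subsidies p_1, p_2 can satisfy (v_i(X_i)+p_i)/w_i ≥ (v_i(X_j)+p_j)/w_j for both i=1,2. -/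
/-- `u i j` is agent `i`'s value for agent `j`'s bundle; the allocation is weighted
envy-freeable if some nonnegative subsidy vector makes it weighted envy-free. -/
def WEFable {N : Type*} (w : N → ℝ) (u : N → N → ℝ) : Prop :=
  ∃ p : N → ℝ, (∀ i, 0 ≤ p i) ∧
    ∀ i j, (u i i + p i) / w i ≥ (u i j + p j) / w j

/-- for weights `(1, 10)` and valuations `v₁(o₁)=5, v₁(o₂)=7,
v₂(o₁)=10, v₂(o₂)=8`, neither the allocation `X₁={o₁}, X₂={o₂}` nor its swap
is weighted envy-freeable. -/
theorem stmt16 :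
    ¬ WEFable (![1, 10] : Fin 2 → ℝ) ![![5, 7], ![10, 8]] ∧
    ¬ WEFable (![1, 10] : Fin 2 → ℝ) ![![7, 5], ![8, 10]] := by
  constructor
  · rintro ⟨p, hp, h⟩
    have h01 := h 0 1
    have h10 := h 1 0
    simp [Matrix.cons_val_zero, Matrix.cons_val_one] at h01 h10
    linarith
  · rintro ⟨p, hp, h⟩
    have h01 := h 0 1
    have h10 := h 1 0
    simp [Matrix.cons_val_zero, Matrix.cons_val_one] at h01 h10
    linarith
end

section
/- Consider two agents with weights w_1 = 1, w_2 = 3 and two identical items, where agents have unit-demand valuations: agent 1 values any nonempty bundle at 30 and agent 2 values any nonempty bundle at 90. Then the (unique welfare-maximizing) allocation giving one item to each agent is not weighted envy-freeable: no nonnegative subsidies p_1, p_2 satisfy (30+p_1)/1 ≥ (30+p_2)/3 and (90+p_2)/3 ≥ (90+p_1)/1 simultaneously. -/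
/-- two agents with weights `(1, 3)`, two identical items,
unit-demand valuations `30` and `90`: the allocation giving one item to each
agent (so each agent values each bundle at its unit-demand value) is not
weighted envy-freeable. -/
theorem stmt17 :
    ¬ WEFable (![1, 3] : Fin 2 → ℝ) ![![30, 30], ![90, 90]] := by
  rintro ⟨p, _, h⟩
  have h1 := h 0 1
  have h2 := h 1 0
  norm_num [Matrix.cons_val_zero, Matrix.cons_val_one, div_le_iff₀, le_div_iff₀, ge_iff_le] at h1 h2
  linarith
end

section
/- Suppose there are n agents and a single item o valued positively by the agents, with positive weights w_i. The allocation giving o to agent i (and nothing to others) is weighted envy-freeable if and only if v_i(o) is maximal among all agents, i.e., v_i(o) ≥ v_j(o) for every agent j. -/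
/-- a single item `o` valued positively by all agents; the allocation
giving `o` to agent `i` is weighted envy-freeable iff `v i` is maximal.
Here `v a` is agent `a`'s value for the item, so agent `a`'s value for agent `b`'s
bundle is `if b = i then v a else 0`. -/
theorem stmt18 {N : Type*} [Fintype N] [DecidableEq N]
    (w v : N → ℝ) (hw : ∀ a, 0 < w a) (hv : ∀ a, 0 < v a) (i : N) :
    (∃ p : N → ℝ, (∀ a, 0 ≤ p a) ∧
      ∀ a b, ((if a = i then v a else 0) + p a) / w a
        ≥ ((if b = i then v a else 0) + p b) / w b) ↔
    (∀ j, v j ≤ v i) := by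
  constructor
  · rintro ⟨p, hp, h⟩ j
    by_cases hj : j = i
    · exact hj ▸ le_refl _
    · have h1 := h j i
      have h2 := h i j
      simp [hj] at h1 h2
      have hwi := hw i
      have hwj := hw j
      have : (v j + p i) / w i ≤ (v i + p i) / w i := le_trans h1 h2
      have := (div_le_div_iff_of_pos_right hwi).mp this
      linarith
  · intro hmax
    refine ⟨fun a => if a = i then 0 else w a * (v i / w i), ?_, ?_⟩
    · intro a
      have h1 := hw a
      have h2 := hv i
      have h3 := hw i
      by_cases ha : a = i <;> simp [ha]
      positivity
    · intro a b
      have hwi := hw i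
      have hwa := hw a
      have hwb := hw b
      have hva := hmax a
      by_cases ha : a = i <;> by_cases hb : b = i <;> simp [ha, hb]
      · rw [mul_div_cancel_left₀ _ hwb.ne']
      · rw [mul_div_cancel_left₀ _ hwa.ne']
        gcongr
      · rw [mul_div_cancel_left₀ _ hwb.ne', mul_div_cancel_left₀ _ hwa.ne']
end
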